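/- arXiv:1503.05008 — 2 statements merged into one kernel-verified Lean document; each statement's English description precedes it below -/
import Mathlib

section
/- Let δX : X → B and δY : Y → B be crossed modules of groups and let X ⋈ Y denote their Peiffer product, equipped with its induced pre-crossed module structure δ⋈ : X ⋈ Y → B and B-action. Then X ⋈ Y, with the canonical morphisms lX : X → X ⋈ Y and lY : Y → X ⋈ Y, is the coproduct of δX and δY in the category of crossed modules over B: δ⋈ is itself a crossed module, and for any crossed module δA : A → B with morphisms f : X → A, g : Y → A of crossed B-modules there is a unique morphism of crossed B-modules h : X ⋈ Y → A with h∘lX = f and h∘lY = g. -/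
open Monoid

/-- The set of Peiffer words in the free product `X ∗ Y` of two pre-crossed modules. -/
def peifferProdRel {B X Y : Type*} [Group B] [Group X] [Group Y]
    [MulDistribMulAction B X] [MulDistribMulAction B Y]
    (δX : X →* B) (δY : Y →* B) : Set (Coprod X Y) :=
  {w : Coprod X Y |
    (∃ (x : X) (y : Y),
      w = Coprod.inl x * Coprod.inr y * (Coprod.inl x)⁻¹ * (Coprod.inr ((δX x) • y))⁻¹) ∨
    (∃ (x : X) (y : Y),
      w = Coprod.inr y * Coprod.inl x * (Coprod.inr y)⁻¹ * (Coprod.inl ((δY y) • x))⁻¹)}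

/-- The Peiffer product of two pre-crossed modules of groups: the quotient of the free
product `X ∗ Y` by the normal closure of the Peiffer words. -/
def PeifferProduct {B X Y : Type*} [Group B] [Group X] [Group Y]
    [MulDistribMulAction B X] [MulDistribMulAction B Y]
    (δX : X →* B) (δY : Y →* B) : Type _ :=
  Coprod X Y ⧸ Subgroup.normalClosure (peifferProdRel δX δY)

instance {B X Y : Type*} [Group B] [Group X] [Group Y]
    [MulDistribMulAction B X] [MulDistribMulAction B Y]
    (δX : X →* B) (δY : Y →* B) : Group (PeifferProduct δX δY) :=
  inferInstanceAs (Group (Coprod X Y ⧸ Subgroup.normalClosure (peifferProdRel δX δY)))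

/-- The canonical morphism `lX : X → X ⋈ Y`. -/
def PeifferProduct.lX {B X Y : Type*} [Group B] [Group X] [Group Y]
    [MulDistribMulAction B X] [MulDistribMulAction B Y]
    (δX : X →* B) (δY : Y →* B) : X →* PeifferProduct δX δY :=
  (QuotientGroup.mk' (Subgroup.normalClosure (peifferProdRel δX δY))).comp Coprod.inl

/-- The canonical morphism `lY : Y → X ⋈ Y`. -/
def PeifferProduct.lY {B X Y : Type*} [Group B] [Group X] [Group Y]
    [MulDistribMulAction B X] [MulDistribMulAction B Y]
    (δX : X →* B) (δY : Y →* B) : Y →* PeifferProduct δX δY :=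
  (QuotientGroup.mk' (Subgroup.normalClosure (peifferProdRel δX δY))).comp Coprod.inr

/-! A homomorphism out of `X ⋈ Y` is a pair of homomorphisms out of `X` and `Y` satisfying the
two Peiffer relations. The boundary `δ⋈`, the action of each `b : B` and
the mediating morphism to `A` are all obtained this way, and every identity between homomorphisms
out of `X ⋈ Y` can be checked on the generators `lX x`, `lY y`, where it reduces to the axioms of
the crossed modules `X`, `Y`, `A` or to the defining relations of `X ⋈ Y`. -/

namespace PeifferProduct

variable {B X Y : Type*} [Group B] [Group X] [Group Y]
  [MulDistribMulAction B X] [MulDistribMulAction B Y] {δX : X →* B} {δY : Y →* B}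

@[ext]
theorem hom_ext {M : Type*} [Monoid M] {φ ψ : PeifferProduct δX δY →* M}
    (hX : φ.comp (lX δX δY) = ψ.comp (lX δX δY))
    (hY : φ.comp (lY δX δY) = ψ.comp (lY δX δY)) : φ = ψ :=
  QuotientGroup.monoidHom_ext _ (Coprod.hom_ext hX hY)

theorem mulAut_ext {e e' : MulAut (PeifferProduct δX δY)}
    (hX : ∀ x, e (lX δX δY x) = e' (lX δX δY x))
    (hY : ∀ y, e (lY δX δY y) = e' (lY δX δY y)) : e = e' :=
  MulEquiv.toMonoidHom_injective <| hom_ext (MonoidHom.ext hX) (MonoidHom.ext hY)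

theorem lX_mul_lY_mul_inv (x : X) (y : Y) :
    lX δX δY x * lY δX δY y * (lX δX δY x)⁻¹ = lY δX δY (δX x • y) := by
  refine mul_inv_eq_one.mp ((QuotientGroup.eq_one_iff _).2 ?_)
  exact Subgroup.subset_normalClosure (Or.inl ⟨x, y, rfl⟩)

theorem lY_mul_lX_mul_inv (x : X) (y : Y) :
    lY δX δY y * lX δX δY x * (lY δX δY y)⁻¹ = lX δX δY (δY y • x) := by
  refine mul_inv_eq_one.mp ((QuotientGroup.eq_one_iff _).2 ?_)
  exact Subgroup.subset_normalClosure (Or.inr ⟨x, y, rfl⟩)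

section Lift

variable {G : Type*} [Group G] (f : X →* G) (g : Y →* G)

theorem normalClosure_peifferProdRel_le_ker (hf : ∀ x y, f x * g y * (f x)⁻¹ = g (δX x • y))
    (hg : ∀ x y, g y * f x * (g y)⁻¹ = f (δY y • x)) :
    Subgroup.normalClosure (peifferProdRel δX δY) ≤ (Coprod.lift f g).ker := by
  refine Subgroup.normalClosure_le_normal ?_
  rintro w (⟨x, y, rfl⟩ | ⟨x, y, rfl⟩) <;>
    simp only [SetLike.mem_coe, MonoidHom.mem_ker, map_mul, map_inv,
      Coprod.lift_apply_inl, Coprod.lift_apply_inr, mul_inv_eq_one]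
  exacts [hf x y, hg x y]

variable (hf : ∀ x y, f x * g y * (f x)⁻¹ = g (δX x • y))
  (hg : ∀ x y, g y * f x * (g y)⁻¹ = f (δY y • x))

def lift : PeifferProduct δX δY →* G :=
  QuotientGroup.lift _ (Coprod.lift f g) (normalClosure_peifferProdRel_le_ker f g hf hg)

@[simp]
theorem lift_lX (x : X) : lift f g hf hg (lX δX δY x) = f x :=
  Coprod.lift_apply_inl f g x

@[simp]
theorem lift_lY (y : Y) : lift f g hf hg (lY δX δY y) = g y :=
  Coprod.lift_apply_inr f g y

theorem lift_comp_lX : (lift f g hf hg).comp (lX δX δY) = f :=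
  MonoidHom.ext (lift_lX f g hf hg)

theorem lift_comp_lY : (lift f g hf hg).comp (lY δX δY) = g :=
  MonoidHom.ext (lift_lY f g hf hg)

theorem eq_lift {h : PeifferProduct δX δY →* G} (hX : h.comp (lX δX δY) = f)
    (hY : h.comp (lY δX δY) = g) : h = lift f g hf hg :=
  hom_ext (by rw [hX, lift_comp_lX]) (by rw [hY, lift_comp_lY])

end Lift

section PreCrossed

variable (hpreX : ∀ (b : B) (x : X), δX (b • x) = b * δX x * b⁻¹)
  (hpreY : ∀ (b : B) (y : Y), δY (b • y) = b * δY y * b⁻¹)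

def boundary : PeifferProduct δX δY →* B :=
  lift δX δY (fun x y => (hpreY (δX x) y).symm) (fun x y => (hpreX (δY y) x).symm)

@[simp]
theorem boundary_lX (x : X) : boundary hpreX hpreY (lX δX δY x) = δX x := lift_lX ..

@[simp]
theorem boundary_lY (y : Y) : boundary hpreX hpreY (lY δX δY y) = δY y := lift_lY ..

/-- `b` acts on the generators of `X ⋈ Y` through the given actions; this respects the Peiffer
relations because `δX (b • x) • (b • y) = b • (δX x • y)`. -/
def smulHom (b : B) : PeifferProduct δX δY →* PeifferProduct δX δY :=
  lift ((lX δX δY).comp (MulDistribMulAction.toMonoidHom X b))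
    ((lY δX δY).comp (MulDistribMulAction.toMonoidHom Y b))
    (fun x y => by
      simp only [MonoidHom.comp_apply, MulDistribMulAction.toMonoidHom_apply,
        lX_mul_lY_mul_inv, hpreX, mul_smul, inv_smul_smul])
    (fun x y => by
      simp only [MonoidHom.comp_apply, MulDistribMulAction.toMonoidHom_apply,
        lY_mul_lX_mul_inv, hpreY, mul_smul, inv_smul_smul])

@[simp]
theorem smulHom_lX (b : B) (x : X) : smulHom hpreX hpreY b (lX δX δY x) = lX δX δY (b • x) :=
  lift_lX ..

@[simp]
theorem smulHom_lY (b : B) (y : Y) : smulHom hpreX hpreY b (lY δX δY y) = lY δX δY (b • y) :=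
  lift_lY ..

theorem smulHom_one : smulHom hpreX hpreY (1 : B) = MonoidHom.id (PeifferProduct δX δY) := by
  ext <;> simp

theorem smulHom_mul (b c : B) :
    smulHom hpreX hpreY (b * c) = (smulHom hpreX hpreY b).comp (smulHom hpreX hpreY c) := by
  ext <;> simp [mul_smul]

def action : B →* MulAut (PeifferProduct δX δY) where
  toFun b := MonoidHom.toMulEquiv (smulHom hpreX hpreY b) (smulHom hpreX hpreY b⁻¹)
    (by rw [← smulHom_mul, inv_mul_cancel, smulHom_one])
    (by rw [← smulHom_mul, mul_inv_cancel, smulHom_one])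
  map_one' := MulEquiv.toMonoidHom_injective (smulHom_one hpreX hpreY)
  map_mul' b c := MulEquiv.toMonoidHom_injective (smulHom_mul hpreX hpreY b c)

@[simp]
theorem action_apply (b : B) (p : PeifferProduct δX δY) :
    action hpreX hpreY b p = smulHom hpreX hpreY b p := rfl

theorem boundary_action (b : B) (p : PeifferProduct δX δY) :
    boundary hpreX hpreY (action hpreX hpreY b p) = b * boundary hpreX hpreY p * b⁻¹ := by
  suffices (boundary hpreX hpreY).comp (smulHom hpreX hpreY b) =
      (MulAut.conj b).toMonoidHom.comp (boundary hpreX hpreY) from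
    DFunLike.congr_fun this p
  ext <;> simp [hpreX, hpreY]

/-- On generators this is either the Peiffer identity of `δX` or `δY`, or one of the defining
relations of `X ⋈ Y`. -/
theorem action_boundary (hpeifX : ∀ x x' : X, (δX x) • x' = x * x' * x⁻¹)
    (hpeifY : ∀ y y' : Y, (δY y) • y' = y * y' * y⁻¹) (p q : PeifferProduct δX δY) :
    action hpreX hpreY (boundary hpreX hpreY p) q = p * q * p⁻¹ := by
  suffices (action hpreX hpreY).comp (boundary hpreX hpreY) = MulAut.conj from
    DFunLike.congr_fun (DFunLike.congr_fun this p) q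
  refine hom_ext (MonoidHom.ext fun x => mulAut_ext ?_ ?_)
    (MonoidHom.ext fun y => mulAut_ext ?_ ?_) <;> intro <;>
    simp [hpeifX, hpeifY, lX_mul_lY_mul_inv, lY_mul_lX_mul_inv]

variable {A : Type*} [Group A] (f : X →* A) (g : Y →* A)
  (hf : ∀ x y, f x * g y * (f x)⁻¹ = g (δX x • y))
  (hg : ∀ x y, g y * f x * (g y)⁻¹ = f (δY y • x))

theorem comp_lift_eq_boundary {δA : A →* B} (hfδ : δA.comp f = δX) (hgδ : δA.comp g = δY) :
    δA.comp (lift f g hf hg) = boundary hpreX hpreY := by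
  ext <;> simp [← hfδ, ← hgδ]

theorem lift_action [MulDistribMulAction B A] (hfequi : ∀ (b : B) (x : X), f (b • x) = b • f x)
    (hgequi : ∀ (b : B) (y : Y), g (b • y) = b • g y) (b : B) (p : PeifferProduct δX δY) :
    lift f g hf hg (action hpreX hpreY b p) = b • lift f g hf hg p := by
  suffices (lift f g hf hg).comp (smulHom hpreX hpreY b) =
      (MulDistribMulAction.toMonoidHom A b).comp (lift f g hf hg) from
    DFunLike.congr_fun this p
  ext <;> simp [hfequi, hgequi]

end PreCrossed

end PeifferProduct

theorem peiffer_product_is_coproduct_of_crossed_modules_general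
    {B X Y A : Type*} [Group B] [Group X] [Group Y] [Group A]
    [MulDistribMulAction B X] [MulDistribMulAction B Y] [MulDistribMulAction B A]
    (δX : X →* B) (δY : Y →* B)
    (hpreX : ∀ (b : B) (x : X), δX (b • x) = b * δX x * b⁻¹)
    (hpreY : ∀ (b : B) (y : Y), δY (b • y) = b * δY y * b⁻¹)
    (hpeifX : ∀ x x' : X, (δX x) • x' = x * x' * x⁻¹)
    (hpeifY : ∀ y y' : Y, (δY y) • y' = y * y' * y⁻¹)
    (δA : A →* B)
    (hpeifA : ∀ a a' : A, (δA a) • a' = a * a' * a⁻¹)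
    (f : X →* A) (g : Y →* A)
    (hfδ : δA.comp f = δX) (hgδ : δA.comp g = δY)
    (hfequi : ∀ (b : B) (x : X), f (b • x) = b • f x)
    (hgequi : ∀ (b : B) (y : Y), g (b • y) = b • g y) :
    ∃ (δp : PeifferProduct δX δY →* B) (actp : B →* MulAut (PeifferProduct δX δY)),
      -- δ⋈ is induced by [δX, δY] and B acts via the actions on the generators:
      (∀ x : X, δp (PeifferProduct.lX δX δY x) = δX x) ∧
      (∀ y : Y, δp (PeifferProduct.lY δX δY y) = δY y) ∧
      (∀ (b : B) (x : X),
        actp b (PeifferProduct.lX δX δY x) = PeifferProduct.lX δX δY (b • x)) ∧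
      (∀ (b : B) (y : Y),
        actp b (PeifferProduct.lY δX δY y) = PeifferProduct.lY δX δY (b • y)) ∧
      -- δ⋈ is a crossed module:
      (∀ (b : B) (p : PeifferProduct δX δY), δp (actp b p) = b * δp p * b⁻¹) ∧
      (∀ p q : PeifferProduct δX δY, actp (δp p) q = p * q * p⁻¹) ∧
      -- universal property of the coproduct in XMod_B:
      (∃ h : PeifferProduct δX δY →* A,
        (δA.comp h = δp ∧ (∀ (b : B) (p : PeifferProduct δX δY), h (actp b p) = b • h p) ∧
          h.comp (PeifferProduct.lX δX δY) = f ∧ h.comp (PeifferProduct.lY δX δY) = g) ∧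
        ∀ h' : PeifferProduct δX δY →* A,
          (δA.comp h' = δp ∧
            (∀ (b : B) (p : PeifferProduct δX δY), h' (actp b p) = b • h' p) ∧
            h'.comp (PeifferProduct.lX δX δY) = f ∧
            h'.comp (PeifferProduct.lY δX δY) = g) → h' = h) := by
  open PeifferProduct in
  have hf : ∀ x y, f x * g y * (f x)⁻¹ = g (δX x • y) := fun x y => by
    rw [hgequi, ← hfδ, MonoidHom.comp_apply, hpeifA]
  have hg : ∀ x y, g y * f x * (g y)⁻¹ = f (δY y • x) := fun x y => by
    rw [hfequi, ← hgδ, MonoidHom.comp_apply, hpeifA]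
  exact ⟨boundary hpreX hpreY, action hpreX hpreY, boundary_lX hpreX hpreY,
    boundary_lY hpreX hpreY, smulHom_lX hpreX hpreY, smulHom_lY hpreX hpreY,
    boundary_action hpreX hpreY, action_boundary hpreX hpreY hpeifX hpeifY,
    ⟨lift f g hf hg,
      ⟨comp_lift_eq_boundary hpreX hpreY f g hf hg hfδ hgδ,
        lift_action hpreX hpreY f g hf hg hfequi hgequi,
        lift_comp_lX f g hf hg, lift_comp_lY f g hf hg⟩,
      fun _ ⟨_, _, hX, hY⟩ => eq_lift f g hf hg hX hY⟩⟩

/-- For crossed modules of groups `δX : X → B` and `δY : Y → B`, the Peiffer product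
`X ⋈ Y`, with its induced structure map `δ⋈` and induced `B`-action and the canonical
morphisms `lX`, `lY`, is the coproduct of `δX` and `δY` in the category of crossed
modules over `B`: `δ⋈` is itself a crossed module, `lX` and `lY` are morphisms of
crossed `B`-modules, and for every crossed module `δA : A → B` with morphisms
`f : X → A`, `g : Y → A` of crossed `B`-modules there is a unique morphism of crossed
`B`-modules `h : X ⋈ Y → A` with `h ∘ lX = f` and `h ∘ lY = g`. -/
theorem peiffer_product_is_coproduct_of_crossed_modules
    {B X Y A : Type*} [Group B] [Group X] [Group Y] [Group A]
    [MulDistribMulAction B X] [MulDistribMulAction B Y] [MulDistribMulAction B A]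
    (δX : X →* B) (δY : Y →* B)
    (hpreX : ∀ (b : B) (x : X), δX (b • x) = b * δX x * b⁻¹)
    (hpreY : ∀ (b : B) (y : Y), δY (b • y) = b * δY y * b⁻¹)
    (hpeifX : ∀ x x' : X, (δX x) • x' = x * x' * x⁻¹)
    (hpeifY : ∀ y y' : Y, (δY y) • y' = y * y' * y⁻¹)
    (δA : A →* B)
    (hpreA : ∀ (b : B) (a : A), δA (b • a) = b * δA a * b⁻¹)
    (hpeifA : ∀ a a' : A, (δA a) • a' = a * a' * a⁻¹)
    (f : X →* A) (g : Y →* A)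
    (hfδ : δA.comp f = δX) (hgδ : δA.comp g = δY)
    (hfequi : ∀ (b : B) (x : X), f (b • x) = b • f x)
    (hgequi : ∀ (b : B) (y : Y), g (b • y) = b • g y) :
    ∃ (δp : PeifferProduct δX δY →* B) (actp : B →* MulAut (PeifferProduct δX δY)),
      -- δ⋈ is induced by [δX, δY] and B acts via the actions on the generators:
      (∀ x : X, δp (PeifferProduct.lX δX δY x) = δX x) ∧
      (∀ y : Y, δp (PeifferProduct.lY δX δY y) = δY y) ∧
      (∀ (b : B) (x : X),
        actp b (PeifferProduct.lX δX δY x) = PeifferProduct.lX δX δY (b • x)) ∧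
      (∀ (b : B) (y : Y),
        actp b (PeifferProduct.lY δX δY y) = PeifferProduct.lY δX δY (b • y)) ∧
      -- δ⋈ is a crossed module:
      (∀ (b : B) (p : PeifferProduct δX δY), δp (actp b p) = b * δp p * b⁻¹) ∧
      (∀ p q : PeifferProduct δX δY, actp (δp p) q = p * q * p⁻¹) ∧
      -- universal property of the coproduct in XMod_B:
      (∃ h : PeifferProduct δX δY →* A,
        (δA.comp h = δp ∧ (∀ (b : B) (p : PeifferProduct δX δY), h (actp b p) = b • h p) ∧
          h.comp (PeifferProduct.lX δX δY) = f ∧ h.comp (PeifferProduct.lY δX δY) = g) ∧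
        ∀ h' : PeifferProduct δX δY →* A,
          (δA.comp h' = δp ∧
            (∀ (b : B) (p : PeifferProduct δX δY), h' (actp b p) = b • h' p) ∧
            h'.comp (PeifferProduct.lX δX δY) = f ∧
            h'.comp (PeifferProduct.lY δX δY) = g) → h' = h) :=
  peiffer_product_is_coproduct_of_crossed_modules_general δX δY hpreX hpreY hpeifX hpeifY δA hpeifA
    f g hfδ hgδ hfequi hgequi
end

section
/- Let δX : X → B and δY : Y → B be pre-crossed modules of groups, and let X ⋊ Y be the semidirect product formed via y • x := (δY y)•x and Y ⋊ X the analogous semidirect product. Then the canonical surjections X ∗ Y → X ⋊ Y and X ∗ Y → Y ⋊ X induce a pushout, and the Peiffer product X ⋈ Y is this pushout. -/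
open Monoid

/-- For pre-crossed modules of groups `δX : X → B` and `δY : Y → B`, the Peiffer product
`X ⋈ Y` is the pushout of the canonical surjections `X ∗ Y → X ⋊ Y` and
`X ∗ Y → Y ⋊ X` (where the semidirect products are formed via the actions
`y • x := (δY y) • x` and `x • y := (δX x) • y`). -/
theorem peiffer_product_is_pushout
    {B X Y : Type*} [Group B] [Group X] [Group Y]
    [MulDistribMulAction B X] [MulDistribMulAction B Y]
    (δX : X →* B) (δY : Y →* B)
    (hpreX : ∀ (b : B) (x : X), δX (b • x) = b * δX x * b⁻¹)
    (hpreY : ∀ (b : B) (y : Y), δY (b • y) = b * δY y * b⁻¹) :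
    -- the canonical surjections from the free product:
    let π₁ : Coprod X Y →* X ⋊[(MulDistribMulAction.toMulAut B X).comp δY] Y :=
      Coprod.lift SemidirectProduct.inl SemidirectProduct.inr
    let π₂ : Coprod X Y →* Y ⋊[(MulDistribMulAction.toMulAut B Y).comp δX] X :=
      Coprod.lift SemidirectProduct.inr SemidirectProduct.inl
    let q : Coprod X Y →* PeifferProduct δX δY :=
      QuotientGroup.mk' (Subgroup.normalClosure (peifferProdRel δX δY))
    ∃ (u : (X ⋊[(MulDistribMulAction.toMulAut B X).comp δY] Y) →* PeifferProduct δX δY)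
      (v : (Y ⋊[(MulDistribMulAction.toMulAut B Y).comp δX] X) →* PeifferProduct δX δY),
      u.comp π₁ = q ∧ v.comp π₂ = q ∧
      -- the universal property of the pushout:
      ∀ (Z : Type*) [Group Z]
        (s : (X ⋊[(MulDistribMulAction.toMulAut B X).comp δY] Y) →* Z)
        (t : (Y ⋊[(MulDistribMulAction.toMulAut B Y).comp δX] X) →* Z),
        s.comp π₁ = t.comp π₂ →
        ∃! w : PeifferProduct δX δY →* Z, w.comp u = s ∧ w.comp v = t := by
  intro π₁ π₂ q
  set N := Subgroup.normalClosure (peifferProdRel δX δY) with hN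
  -- the two families of Peiffer relations hold in the quotient
  have hq1 : ∀ (x : X) (y : Y),
      q (Coprod.inl x * Coprod.inr y * (Coprod.inl x)⁻¹) = q (Coprod.inr ((δX x) • y)) := by
    intro x y
    have hmem : Coprod.inl x * Coprod.inr y * (Coprod.inl x)⁻¹ *
        (Coprod.inr ((δX x) • y))⁻¹ ∈ N :=
      Subgroup.subset_normalClosure (Or.inl ⟨x, y, rfl⟩)
    have h1 : q (Coprod.inl x * Coprod.inr y * (Coprod.inl x)⁻¹ *
        (Coprod.inr ((δX x) • y))⁻¹) = 1 := (QuotientGroup.eq_one_iff _).mpr hmem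
    rw [map_mul, map_inv, mul_inv_eq_one] at h1
    exact h1
  have hq2 : ∀ (x : X) (y : Y),
      q (Coprod.inr y * Coprod.inl x * (Coprod.inr y)⁻¹) = q (Coprod.inl ((δY y) • x)) := by
    intro x y
    have hmem : Coprod.inr y * Coprod.inl x * (Coprod.inr y)⁻¹ *
        (Coprod.inl ((δY y) • x))⁻¹ ∈ N :=
      Subgroup.subset_normalClosure (Or.inr ⟨x, y, rfl⟩)
    have h1 : q (Coprod.inr y * Coprod.inl x * (Coprod.inr y)⁻¹ *
        (Coprod.inl ((δY y) • x))⁻¹) = 1 := (QuotientGroup.eq_one_iff _).mpr hmem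
    rw [map_mul, map_inv, mul_inv_eq_one] at h1
    exact h1
  -- the conjugation relations in the two semidirect products
  have e₁ : ∀ (x : X) (y : Y),
      (SemidirectProduct.inr y : X ⋊[(MulDistribMulAction.toMulAut B X).comp δY] Y) *
        SemidirectProduct.inl x * (SemidirectProduct.inr y)⁻¹ =
        SemidirectProduct.inl ((δY y) • x) := by
    intro x y
    rw [← map_inv, ← SemidirectProduct.inl_aut]
    rfl
  have e₂ : ∀ (x : X) (y : Y),
      (SemidirectProduct.inr x : Y ⋊[(MulDistribMulAction.toMulAut B Y).comp δX] X) *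
        SemidirectProduct.inl y * (SemidirectProduct.inr x)⁻¹ =
        SemidirectProduct.inl ((δX x) • y) := by
    intro x y
    rw [← map_inv, ← SemidirectProduct.inl_aut]
    rfl
  -- `π₁` kills the second family of Peiffer words, `π₂` the first
  have k₁ : ∀ (x : X) (y : Y),
      π₁ (Coprod.inr y * Coprod.inl x * (Coprod.inr y)⁻¹ * (Coprod.inl ((δY y) • x))⁻¹) = 1 := by
    intro x y
    rw [map_mul, map_mul, map_mul, map_inv, map_inv]
    simp only [π₁, Coprod.lift_apply_inl, Coprod.lift_apply_inr]
    rw [e₁ x y, mul_inv_cancel]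
  have k₂ : ∀ (x : X) (y : Y),
      π₂ (Coprod.inl x * Coprod.inr y * (Coprod.inl x)⁻¹ * (Coprod.inr ((δX x) • y))⁻¹) = 1 := by
    intro x y
    rw [map_mul, map_mul, map_mul, map_inv, map_inv]
    simp only [π₂, Coprod.lift_apply_inl, Coprod.lift_apply_inr]
    rw [e₂ x y, mul_inv_cancel]
  -- define u and v via the universal property of the semidirect products
  refine ⟨SemidirectProduct.lift (q.comp Coprod.inl) (q.comp Coprod.inr) (fun y => by
      ext x
      show q (Coprod.inl ((δY y) • x)) =
        q (Coprod.inr y) * q (Coprod.inl x) * (q (Coprod.inr y))⁻¹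
      rw [← hq2 x y, map_mul, map_mul, map_inv]),
    SemidirectProduct.lift (q.comp Coprod.inr) (q.comp Coprod.inl) (fun x => by
      ext y
      show q (Coprod.inr ((δX x) • y)) =
        q (Coprod.inl x) * q (Coprod.inr y) * (q (Coprod.inl x))⁻¹
      rw [← hq1 x y, map_mul, map_mul, map_inv]),
    ?_, ?_, ?_⟩
  · exact Coprod.hom_ext (by ext x; simp [π₁]) (by ext y; simp [π₁])
  · exact Coprod.hom_ext (by ext x; simp [π₂]) (by ext y; simp [π₂])
  · intro Z _ s t hst
    have hst' : ∀ g : Coprod X Y, s (π₁ g) = t (π₂ g) := fun g => DFunLike.congr_fun hst g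
    -- kernel condition for the induced map on the quotient
    have hker : N ≤ (s.comp π₁).ker := by
      apply Subgroup.normalClosure_le_normal
      rintro w (⟨x, y, rfl⟩ | ⟨x, y, rfl⟩)
      · rw [SetLike.mem_coe, MonoidHom.mem_ker, MonoidHom.comp_apply, hst' _, k₂ x y, map_one]
      · rw [SetLike.mem_coe, MonoidHom.mem_ker, MonoidHom.comp_apply, k₁ x y, map_one]
    have hu : ∀ g : Coprod X Y,
        QuotientGroup.lift N (s.comp π₁) hker (QuotientGroup.mk g) = s (π₁ g) :=
      fun g => rfl
    refine ⟨QuotientGroup.lift N (s.comp π₁) hker, ⟨?_, ?_⟩, ?_⟩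
    · apply SemidirectProduct.hom_ext <;> ext a
      · show QuotientGroup.lift N (s.comp π₁) hker (SemidirectProduct.lift (q.comp Coprod.inl) (q.comp Coprod.inr) (fun y => by ext x; show q (Coprod.inl ((δY y) • x)) = q (Coprod.inr y) * q (Coprod.inl x) * (q (Coprod.inr y))⁻¹; rw [← hq2 x y, map_mul, map_mul, map_inv]) (SemidirectProduct.inl a)) = _
        rw [SemidirectProduct.lift_inl]
        refine (hu (Coprod.inl a)).trans ?_
        simp [π₁]
      · show QuotientGroup.lift N (s.comp π₁) hker (SemidirectProduct.lift (q.comp Coprod.inl) (q.comp Coprod.inr) (fun y => by ext x; show q (Coprod.inl ((δY y) • x)) = q (Coprod.inr y) * q (Coprod.inl x) * (q (Coprod.inr y))⁻¹; rw [← hq2 x y, map_mul, map_mul, map_inv]) (SemidirectProduct.inr a)) = _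
        rw [SemidirectProduct.lift_inr]
        refine (hu (Coprod.inr a)).trans ?_
        simp [π₁]
    · apply SemidirectProduct.hom_ext <;> ext a
      · show QuotientGroup.lift N (s.comp π₁) hker (SemidirectProduct.lift (q.comp Coprod.inr) (q.comp Coprod.inl) (fun x => by ext y; show q (Coprod.inr ((δX x) • y)) = q (Coprod.inl x) * q (Coprod.inr y) * (q (Coprod.inl x))⁻¹; rw [← hq1 x y, map_mul, map_mul, map_inv]) (SemidirectProduct.inl a)) = _
        rw [SemidirectProduct.lift_inl]
        refine (hu (Coprod.inr a)).trans ?_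
        rw [hst']
        simp [π₂]
      · show QuotientGroup.lift N (s.comp π₁) hker (SemidirectProduct.lift (q.comp Coprod.inr) (q.comp Coprod.inl) (fun x => by ext y; show q (Coprod.inr ((δX x) • y)) = q (Coprod.inl x) * q (Coprod.inr y) * (q (Coprod.inl x))⁻¹; rw [← hq1 x y, map_mul, map_mul, map_inv]) (SemidirectProduct.inr a)) = _
        rw [SemidirectProduct.lift_inr]
        refine (hu (Coprod.inl a)).trans ?_
        rw [hst']
        simp [π₂]
    · rintro w' ⟨hw1, hw2⟩
      apply QuotientGroup.monoidHom_ext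
      refine Coprod.hom_ext ?_ ?_ <;> ext a
      · have h1 := DFunLike.congr_fun hw1 (SemidirectProduct.inl a)
        simp only [MonoidHom.comp_apply, SemidirectProduct.lift_inl] at h1
        refine h1.trans ?_
        refine Eq.trans ?_ (hu (Coprod.inl a)).symm
        simp [π₁]
      · have h1 := DFunLike.congr_fun hw1 (SemidirectProduct.inr a)
        simp only [MonoidHom.comp_apply, SemidirectProduct.lift_inr] at h1
        refine h1.trans ?_
        refine Eq.trans ?_ (hu (Coprod.inr a)).symm
        simp [π₁]
end
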